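/- arXiv:2211.15453 — 9 statements merged into one kernel-verified Lean document; each statement's English description precedes it below -/
import Mathlib

section
/- For a probability distribution P_U on a finite set U and α > 1, the maximum over probability distributions Q on U of ∑_u P_U(u) Q(u)^((α-1)/α) equals (∑_u P_U(u)^α)^(1/α), and it is attained by Q(u) = P_U(u)^α / ∑_{u'} P_U(u')^α. -/
open Finset Real

theorem stmt0 {U : Type*} [Fintype U] [Nonempty U]
    (P : U → ℝ) (hP : ∀ u, 0 ≤ P u) (hPsum : ∑ u, P u = 1)
    {α : ℝ} (hα : 1 < α) :
    IsGreatest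
      {v : ℝ | ∃ Q : U → ℝ, (∀ u, 0 ≤ Q u) ∧ (∑ u, Q u = 1) ∧
        v = ∑ u, P u * Q u ^ ((α - 1) / α)}
      ((∑ u, P u ^ α) ^ (1 / α)) ∧
    ∑ u, P u * (P u ^ α / ∑ u', P u' ^ α) ^ ((α - 1) / α)
      = (∑ u, P u ^ α) ^ (1 / α) := by
  have hα0 : (0:ℝ) < α := lt_trans zero_lt_one hα
  set S : ℝ := ∑ u, P u ^ α with hS
  have hS0 : 0 < S := by
    have : ∃ u : U, 0 < P u := by
      by_contra h
      push_neg at h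
      have : ∀ u, P u = 0 := fun u => le_antisymm (h u) (hP u)
      simp [this] at hPsum
    obtain ⟨u, hu⟩ := this
    have h1 : 0 < P u ^ α := Real.rpow_pos_of_pos hu α
    have h2 : ∀ v ∈ (Finset.univ : Finset U), 0 ≤ P v ^ α :=
      fun v _ => Real.rpow_nonneg (hP v) α
    exact lt_of_lt_of_le h1 (Finset.single_le_sum h2 (Finset.mem_univ u))
  -- key computation
  have hkey : ∑ u, P u * (P u ^ α / S) ^ ((α - 1) / α) = S ^ (1 / α) := by
    have hterm : ∀ u, P u * (P u ^ α / S) ^ ((α - 1) / α)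
        = P u ^ α / S ^ ((α - 1) / α) := by
      intro u
      rw [Real.div_rpow (Real.rpow_nonneg (hP u) α) hS0.le,
        ← Real.rpow_mul (hP u)]
      have hm : α * ((α - 1) / α) = α - 1 := by field_simp
      rw [hm]
      rw [← mul_div_assoc]
      congr 1
      nth_rewrite 1 [← Real.rpow_one (P u)]
      rw [← Real.rpow_add' (hP u) (by intro h; exact hα0.ne' (by linarith)),
        show (1:ℝ) + (α - 1) = α by ring]
    rw [Finset.sum_congr rfl fun u _ => hterm u, ← Finset.sum_div, ← hS]
    rw [div_eq_iff (Real.rpow_pos_of_pos hS0 _).ne', mul_comm]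
    rw [← Real.rpow_add hS0]
    rw [show (α - 1) / α + 1 / α = 1 by field_simp; ring, Real.rpow_one]
  refine ⟨⟨?_, ?_⟩, hkey⟩
  · exact ⟨fun u => P u ^ α / S, fun u => div_nonneg (Real.rpow_nonneg (hP u) α) hS0.le,
      by rw [← Finset.sum_div, ← hS, div_self hS0.ne'], hkey.symm⟩
  · rintro v ⟨Q, hQ0, hQsum, rfl⟩
    have hpq : Real.HolderConjugate α (α / (α - 1)) := Real.HolderConjugate.conjExponent hα
    have := Real.inner_le_Lp_mul_Lq_of_nonneg (Finset.univ) hpq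
      (f := P) (g := fun u => Q u ^ ((α - 1) / α))
      (fun u _ => hP u) (fun u _ => Real.rpow_nonneg (hQ0 u) _)
    have hg : ∀ u, (Q u ^ ((α - 1) / α)) ^ (α / (α - 1)) = Q u := by
      intro u
      rw [← Real.rpow_mul (hQ0 u)]
      rw [show (α - 1) / α * (α / (α - 1)) = 1 by
        rw [div_mul_div_comm, mul_comm, div_self (mul_pos hα0 (sub_pos.mpr hα)).ne']]
      exact Real.rpow_one _
    calc ∑ u, P u * Q u ^ ((α - 1) / α)
        ≤ (∑ u, P u ^ α) ^ (1 / α) * (∑ u, (Q u ^ ((α - 1) / α)) ^ (α / (α - 1))) ^ (1 / (α / (α - 1))) := this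
      _ = (∑ u, P u ^ α) ^ (1 / α) := by
          rw [Finset.sum_congr rfl fun u _ => hg u, hQsum, Real.one_rpow, mul_one]
end

section
/- Fix α > 1, a finite set Y, a strictly positive probability distribution q on Y, and nonnegative weights g : Y → ℝ≥0. Then the function β ↦ (α/((α-1)β)) · log ∑_y q(y)^(1-β) g(y)^(β/α) is monotonically non-decreasing in β on [1, ∞), provided ∑_y q(y)^(1-β) g(y)^(β/α) ≥ 1 for all β (equivalently the log is nonnegative). More precisely, without that proviso: for 1 ≤ β₁ ≤ β₂, ∑_y q(y)^(1-β₁) g(y)^(β₁/α) ≤ (∑_y q(y)^(1-β₂) g(y)^(β₂/α))^(β₁/β₂). -/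
/-!
Writing `q y ^ (1 - β) * g y ^ (β / α) = q y * X y ^ β` with `X y = g y ^ α⁻¹ / q y`, both sides
are `q`-weighted power means of `X`, and the inequality is the monotonicity of power means in the
exponent, i.e. Jensen's inequality for `t ↦ t ^ (β₂ / β₁)`.
-/

open Finset Real

namespace Real

theorem sum_mul_rpow_le_rpow_sum_mul_rpow {ι : Type*} (s : Finset ι) (w z : ι → ℝ)
    (hw : ∀ i ∈ s, 0 ≤ w i) (hw' : ∑ i ∈ s, w i = 1) (hz : ∀ i ∈ s, 0 ≤ z i)
    {p r : ℝ} (hp : 0 < p) (hpr : p ≤ r) :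
    ∑ i ∈ s, w i * z i ^ p ≤ (∑ i ∈ s, w i * z i ^ r) ^ (p / r) := by
  have hr : 0 < r := hp.trans_le hpr
  have hpow : ∀ i ∈ s, (z i ^ p) ^ (r / p) = z i ^ r := fun i hi => by
    rw [← rpow_mul (hz i hi), mul_div_cancel₀ _ hp.ne']
  have := arith_mean_le_rpow_mean s w (fun i => z i ^ p) hw hw'
    (fun i hi => rpow_nonneg (hz i hi) p) ((one_le_div hp).mpr hpr)
  rwa [sum_congr rfl fun i hi => congrArg (w i * ·) (hpow i hi), one_div_div] at this

theorem rpow_one_sub_mul_rpow_div {a b : ℝ} (ha : 0 < a) (hb : 0 ≤ b) (α β : ℝ) :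
    a ^ (1 - β) * b ^ (β / α) = a * (b ^ α⁻¹ / a) ^ β := by
  rw [div_rpow (rpow_nonneg hb _) ha.le, ← rpow_mul hb, rpow_sub ha, rpow_one,
    inv_mul_eq_div]
  ring

end Real

theorem stmt2_general {Y : Type*} [Fintype Y]
    (q : Y → ℝ) (hq : ∀ y, 0 < q y) (hqsum : ∑ y, q y = 1)
    (g : Y → ℝ) (hg : ∀ y, 0 ≤ g y)
    {α β₁ β₂ : ℝ} (hβ₁ : 1 ≤ β₁) (hβ : β₁ ≤ β₂) :
    ∑ y, q y ^ (1 - β₁) * g y ^ (β₁ / α)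
      ≤ (∑ y, q y ^ (1 - β₂) * g y ^ (β₂ / α)) ^ (β₁ / β₂) := by
  simp only [rpow_one_sub_mul_rpow_div (hq _) (hg _)]
  exact sum_mul_rpow_le_rpow_sum_mul_rpow univ q _ (fun y _ => (hq y).le) hqsum
    (fun y _ => div_nonneg (rpow_nonneg (hg y) _) (hq y).le) (one_pos.trans_le hβ₁) hβ

theorem stmt2 {Y : Type*} [Fintype Y] [Nonempty Y]
    (q : Y → ℝ) (hq : ∀ y, 0 < q y) (hqsum : ∑ y, q y = 1)
    (g : Y → ℝ) (hg : ∀ y, 0 ≤ g y)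
    {α β₁ β₂ : ℝ} (hα : 1 < α) (hβ₁ : 1 ≤ β₁) (hβ : β₁ ≤ β₂) :
    ∑ y, q y ^ (1 - β₁) * g y ^ (β₁ / α)
      ≤ (∑ y, q y ^ (1 - β₂) * g y ^ (β₂ / α)) ^ (β₁ / β₂) :=
  stmt2_general q hq hqsum g hg hβ₁ hβ
end

section
/- For α > 1, β ≥ 1, a finite set Y, a full-support probability distribution q on Y, a finite set X, a probability distribution P̃ on X, and a row-stochastic kernel W : X → (Y → ℝ≥0) (i.e., each W(x,·) is a probability distribution), we have ∑_y q(y)^(1-β) (∑_x P̃(x) W(x,y)^α)^(β/α) ≥ 1, with the special case q = W(x',·) giving nonnegativity of maximal α,β-leakage. -/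
/-! Writing `M y = ∑ x, P̃ x * W x y` for the output distribution, Jensen's inequality for `t ↦ t ^ α`
gives `M y ^ β ≤ (∑ x, P̃ x * W x y ^ α) ^ (β / α)`, and Jensen's inequality for `t ↦ t ^ β` with
weights `q` gives `1 = (∑ y, q y * (M y / q y)) ^ β ≤ ∑ y, q y ^ (1 - β) * M y ^ β`
(the nonnegativity of the Rényi divergence of order `β`). -/

open Finset Real

theorem rpow_sum_mul_le_rpow_sum_mul_rpow_div {ι : Type*} (s : Finset ι) {w f : ι → ℝ}
    (hw : ∀ i ∈ s, 0 ≤ w i) (hw1 : ∑ i ∈ s, w i = 1) (hf : ∀ i ∈ s, 0 ≤ f i)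
    {α β : ℝ} (hα : 1 ≤ α) (hβ : 0 ≤ β) :
    (∑ i ∈ s, w i * f i) ^ β ≤ (∑ i ∈ s, w i * f i ^ α) ^ (β / α) := by
  have hmean : 0 ≤ ∑ i ∈ s, w i * f i :=
    sum_nonneg fun i hi => mul_nonneg (hw i hi) (hf i hi)
  calc (∑ i ∈ s, w i * f i) ^ β = ((∑ i ∈ s, w i * f i) ^ α) ^ (β / α) := by
        rw [← rpow_mul hmean, mul_div_cancel₀ β (by positivity)]
    _ ≤ (∑ i ∈ s, w i * f i ^ α) ^ (β / α) :=
        rpow_le_rpow (rpow_nonneg hmean α)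
          (rpow_arith_mean_le_arith_mean_rpow s w f hw hw1 hf hα) (by positivity)

theorem one_le_sum_rpow_one_sub_mul_rpow {ι : Type*} (s : Finset ι) {q p : ι → ℝ}
    (hq : ∀ i ∈ s, 0 < q i) (hq1 : ∑ i ∈ s, q i = 1)
    (hp : ∀ i ∈ s, 0 ≤ p i) (hp1 : ∑ i ∈ s, p i = 1) {β : ℝ} (hβ : 1 ≤ β) :
    1 ≤ ∑ i ∈ s, q i ^ (1 - β) * p i ^ β := by
  have hratio : ∑ i ∈ s, q i * (p i / q i) = 1 := by
    rw [← hp1]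
    exact sum_congr rfl fun i hi => mul_div_cancel₀ (p i) (hq i hi).ne'
  have hjensen := rpow_arith_mean_le_arith_mean_rpow s q (fun i => p i / q i)
    (fun i hi => (hq i hi).le) hq1 (fun i hi => div_nonneg (hp i hi) (hq i hi).le) hβ
  rw [hratio, one_rpow] at hjensen
  refine hjensen.trans_eq (sum_congr rfl fun i hi => ?_)
  rw [div_rpow (hp i hi) (hq i hi).le, rpow_sub (hq i hi), rpow_one]
  field_simp

theorem stmt3_general {X Y : Type*} [Fintype X] [Fintype Y]
    (W : X → Y → ℝ) (hW : ∀ x y, 0 ≤ W x y) (hWsum : ∀ x, ∑ y, W x y = 1)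
    (q : Y → ℝ) (hq : ∀ y, 0 < q y) (hqsum : ∑ y, q y = 1)
    (Pt : X → ℝ) (hPt : ∀ x, 0 ≤ Pt x) (hPtsum : ∑ x, Pt x = 1)
    {α β : ℝ} (hα : 1 < α) (hβ : 1 ≤ β) :
    1 ≤ ∑ y, q y ^ (1 - β) * (∑ x, Pt x * W x y ^ α) ^ (β / α) := by
  have hout : ∀ y, 0 ≤ ∑ x, Pt x * W x y := fun y =>
    sum_nonneg fun x _ => mul_nonneg (hPt x) (hW x y)
  have hout1 : ∑ y, ∑ x, Pt x * W x y = 1 := by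
    rw [sum_comm]
    simp_rw [← mul_sum, hWsum, mul_one, hPtsum]
  calc 1 ≤ ∑ y, q y ^ (1 - β) * (∑ x, Pt x * W x y) ^ β :=
        one_le_sum_rpow_one_sub_mul_rpow univ (fun y _ => hq y) hqsum (fun y _ => hout y) hout1 hβ
    _ ≤ ∑ y, q y ^ (1 - β) * (∑ x, Pt x * W x y ^ α) ^ (β / α) :=
        sum_le_sum fun y _ => mul_le_mul_of_nonneg_left
          (rpow_sum_mul_le_rpow_sum_mul_rpow_div univ (fun x _ => hPt x) hPtsum
            (fun x _ => hW x y) hα.le (by linarith))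
          (rpow_nonneg (hq y).le _)

theorem stmt3 {X Y : Type*} [Fintype X] [Nonempty X] [Fintype Y] [Nonempty Y]
    (W : X → Y → ℝ) (hW : ∀ x y, 0 ≤ W x y) (hWsum : ∀ x, ∑ y, W x y = 1)
    (q : Y → ℝ) (hq : ∀ y, 0 < q y) (hqsum : ∑ y, q y = 1)
    (Pt : X → ℝ) (hPt : ∀ x, 0 ≤ Pt x) (hPtsum : ∑ x, Pt x = 1)
    {α β : ℝ} (hα : 1 < α) (hβ : 1 ≤ β) :
    1 ≤ ∑ y, q y ^ (1 - β) * (∑ x, Pt x * W x y ^ α) ^ (β / α) :=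
  stmt3_general W hW hWsum q hq hqsum Pt hPt hPtsum hα hβ
end

section
/- With the notation of the previous statement, if ∑_y q(y)^(1-β) (∑_x P̃(x) W(x,y)^α)^(β/α) = 1 for q = W(x',·) for every x' ∈ X and for every probability distribution P̃ on X (with α > 1, β ≥ 1), then W(x,·) = W(x',·) for all x, x' ∈ X; i.e., maximal α,β-leakage is zero if and only if the channel output distribution does not depend on the input. -/
open Finset Real

/-!
Feed the channel the uniform mixture of two inputs `x, x'` and take `q = W(x', ·)`. The power
mean inequality bounds `((W(x,y)^α + W(x',y)^α) / 2)^(1/α)` below by the arithmetic mean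
`p(y) = (W(x,y) + W(x',y)) / 2`, strictly wherever `W(x,y) ≠ W(x',y)`, and Jensen's inequality
for `t ↦ t^β` gives `∑ q^(1-β) p^β ≥ (∑ p)^β = 1`. So the sum in the hypothesis exceeds `1`
unless `W(x, ·) = W(x', ·)`.
-/

lemma rpow_le_rpow_div_of_rpow_le {u v α β : ℝ} (hu : 0 ≤ u) (hα : 0 < α) (hβ : 0 ≤ β)
    (h : u ^ α ≤ v) : u ^ β ≤ v ^ (β / α) :=
  calc u ^ β = (u ^ α) ^ (β / α) := by rw [← rpow_mul hu, mul_div_cancel₀ _ hα.ne']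
    _ ≤ v ^ (β / α) := rpow_le_rpow (rpow_nonneg hu α) h (div_nonneg hβ hα.le)

lemma rpow_lt_rpow_div_of_rpow_lt {u v α β : ℝ} (hu : 0 ≤ u) (hα : 0 < α) (hβ : 0 < β)
    (h : u ^ α < v) : u ^ β < v ^ (β / α) :=
  calc u ^ β = (u ^ α) ^ (β / α) := by rw [← rpow_mul hu, mul_div_cancel₀ _ hα.ne']
    _ < v ^ (β / α) := rpow_lt_rpow (rpow_nonneg hu α) h (div_pos hβ hα)

lemma rpow_midpoint_le_rpow_mean {a b α β : ℝ} (ha : 0 ≤ a) (hb : 0 ≤ b) (hα : 1 ≤ α)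
    (hβ : 0 ≤ β) : ((a + b) / 2) ^ β ≤ ((a ^ α + b ^ α) / 2) ^ (β / α) := by
  refine rpow_le_rpow_div_of_rpow_le (by positivity) (by linarith) hβ ?_
  have hconv := (convexOn_rpow hα).2 (Set.mem_Ici.2 ha) (Set.mem_Ici.2 hb)
    (by norm_num : (0 : ℝ) ≤ 1 / 2) (by norm_num : (0 : ℝ) ≤ 1 / 2) (by norm_num)
  calc ((a + b) / 2) ^ α = (1 / 2 * a + 1 / 2 * b) ^ α := by ring_nf
    _ ≤ 1 / 2 * a ^ α + 1 / 2 * b ^ α := hconv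
    _ = (a ^ α + b ^ α) / 2 := by ring

lemma rpow_midpoint_lt_rpow_mean {a b α β : ℝ} (ha : 0 ≤ a) (hb : 0 ≤ b) (hab : a ≠ b)
    (hα : 1 < α) (hβ : 0 < β) : ((a + b) / 2) ^ β < ((a ^ α + b ^ α) / 2) ^ (β / α) := by
  refine rpow_lt_rpow_div_of_rpow_lt (by positivity) (by linarith) hβ ?_
  have hconv := (strictConvexOn_rpow hα).2 (Set.mem_Ici.2 ha) (Set.mem_Ici.2 hb) hab
    (by norm_num : (0 : ℝ) < 1 / 2) (by norm_num : (0 : ℝ) < 1 / 2) (by norm_num)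
  calc ((a + b) / 2) ^ α = (1 / 2 * a + 1 / 2 * b) ^ α := by ring_nf
    _ < 1 / 2 * a ^ α + 1 / 2 * b ^ α := hconv
    _ = (a ^ α + b ^ α) / 2 := by ring

lemma rpow_sum_le_sum_rpow_one_sub_mul_rpow {ι : Type*} (s : Finset ι) {p q : ι → ℝ}
    (hp : ∀ i ∈ s, 0 ≤ p i) (hq : ∀ i ∈ s, 0 < q i) (hq₁ : ∑ i ∈ s, q i = 1) {β : ℝ}
    (hβ : 1 ≤ β) : (∑ i ∈ s, p i) ^ β ≤ ∑ i ∈ s, q i ^ (1 - β) * p i ^ β :=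
  calc (∑ i ∈ s, p i) ^ β = (∑ i ∈ s, q i * (p i / q i)) ^ β := by
        congr 1
        exact sum_congr rfl fun i hi => (mul_div_cancel₀ _ (hq i hi).ne').symm
    _ ≤ ∑ i ∈ s, q i * (p i / q i) ^ β :=
        rpow_arith_mean_le_arith_mean_rpow s q _ (fun i hi => (hq i hi).le) hq₁
          (fun i hi => div_nonneg (hp i hi) (hq i hi).le) hβ
    _ = ∑ i ∈ s, q i ^ (1 - β) * p i ^ β := sum_congr rfl fun i hi => by
        rw [div_rpow (hp i hi) (hq i hi).le, rpow_sub (hq i hi), rpow_one]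
        field_simp

lemma sum_half_ite_add_half_ite_mul {X : Type*} [Fintype X] [DecidableEq X] (x x' : X)
    (f : X → ℝ) :
    ∑ z, ((if z = x then 1 / 2 else 0) + (if z = x' then 1 / 2 else 0)) * f z
      = (f x + f x') / 2 := by
  simp only [add_mul, ite_mul, zero_mul, sum_add_distrib, sum_ite_eq', mem_univ, if_true]
  ring

theorem stmt4_general {X Y : Type*} [Fintype X] [Fintype Y]
    (W : X → Y → ℝ) (hW : ∀ x y, 0 < W x y) (hWsum : ∀ x, ∑ y, W x y = 1)
    {α β : ℝ} (hα : 1 < α) (hβ : 1 ≤ β)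
    (h : ∀ x' : X, ∀ Pt : X → ℝ, (∀ x, 0 ≤ Pt x) → (∑ x, Pt x = 1) →
      ∑ y, W x' y ^ (1 - β) * (∑ x, Pt x * W x y ^ α) ^ (β / α) = 1) :
    ∀ x x' : X, ∀ y : Y, W x y = W x' y := by
  classical
  intro x x' y₀
  by_contra hne
  have hleak := h x' (fun z => (if z = x then 1 / 2 else 0) + (if z = x' then 1 / 2 else 0))
    (fun z => by positivity) (by simpa using sum_half_ite_add_half_ite_mul x x' 1)
  simp only [sum_half_ite_add_half_ite_mul] at hleak
  have hβ₀ : 0 < β := by linarith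
  have hmid : ∑ y, (W x y + W x' y) / 2 = 1 := by
    rw [← sum_div, sum_add_distrib, hWsum, hWsum]; norm_num
  have hlt := calc (1 : ℝ) = (∑ y, (W x y + W x' y) / 2) ^ β := by rw [hmid, one_rpow]
    _ ≤ ∑ y, W x' y ^ (1 - β) * ((W x y + W x' y) / 2) ^ β :=
        rpow_sum_le_sum_rpow_one_sub_mul_rpow univ
          (fun y _ => by have := hW x y; have := hW x' y; positivity)
          (fun y _ => hW x' y) (hWsum x') hβ
    _ < ∑ y, W x' y ^ (1 - β) * ((W x y ^ α + W x' y ^ α) / 2) ^ (β / α) := by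
        refine sum_lt_sum (fun y _ => ?_) ⟨y₀, mem_univ _, ?_⟩
        · exact mul_le_mul_of_nonneg_left (rpow_midpoint_le_rpow_mean (hW x y).le
            (hW x' y).le hα.le hβ₀.le) (rpow_nonneg (hW x' y).le _)
        · exact mul_lt_mul_of_pos_left (rpow_midpoint_lt_rpow_mean (hW x y₀).le
            (hW x' y₀).le hne hα hβ₀) (rpow_pos_of_pos (hW x' y₀) _)
  linarith

theorem stmt4 {X Y : Type*} [Fintype X] [Nonempty X] [Fintype Y] [Nonempty Y]
    (W : X → Y → ℝ) (hW : ∀ x y, 0 < W x y) (hWsum : ∀ x, ∑ y, W x y = 1)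
    {α β : ℝ} (hα : 1 < α) (hβ : 1 ≤ β)
    (h : ∀ x' : X, ∀ Pt : X → ℝ, (∀ x, 0 ≤ Pt x) → (∑ x, Pt x = 1) →
      ∑ y, W x' y ^ (1 - β) * (∑ x, Pt x * W x y ^ α) ^ (β / α) = 1) :
    ∀ x x' : X, ∀ y : Y, W x y = W x' y :=
  stmt4_general W hW hWsum hα hβ h
end

section
/- For α > 1, β ≥ α, finite sets X and Y, a channel W : X → dist(Y) with full support, and any x' ∈ X: the supremum over probability distributions P̃ on X of ∑_y W(x',y)^(1-β) (∑_x P̃(x) W(x,y)^α)^(β/α) is attained at a point mass, i.e., it equals max_{x ∈ X} ∑_y W(x',y)^(1-β) W(x,y)^β. Consequently, for α ≤ β, maximal α,β-leakage equals max_{x,x'} (α/((α-1)β)) log ∑_y W(x',y)^(1-β) W(x,y)^β. -/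
/-!
For `β / α ≥ 1` the map `t ↦ t ^ (β / α)` is convex, so by Jensen's inequality
`(∑ₓ P x W(x,y)^α)^(β/α) ≤ ∑ₓ P x W(x,y)^β` for every distribution `P`. Summing against the
non-negative weights `W(x',y)^(1-β)` bounds the objective by an average over `x` of its values at
the point masses `δₓ`, hence by their maximum, which is attained at a point mass. Since
`t ↦ α / ((α - 1) β) · log t` is increasing on `(0, ∞)` and the objective is positive, the
statement about the leakage follows by maximising over `x'` as well.
-/

open Finset Real

section SimplexMaximum

variable {X : Type*} [Fintype X] [Nonempty X]

lemma sum_mul_le_sup'_of_mem_stdSimplex {P : X → ℝ} (hP : P ∈ stdSimplex ℝ X) (g : X → ℝ) :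
    ∑ x, P x * g x ≤ univ.sup' univ_nonempty g := by
  simpa [centerMass, hP.2] using
    centerMass_le_sup (s := univ) (f := g) (fun x _ => hP.1 x) (by simp [hP.2])

lemma isGreatest_of_le_sum_mul [DecidableEq X] (f : (X → ℝ) → ℝ) (g : X → ℝ)
    (hle : ∀ P ∈ stdSimplex ℝ X, f P ≤ ∑ x, P x * g x)
    (hsingle : ∀ x, f (Pi.single x 1) = g x) :
    IsGreatest {v | ∃ P : X → ℝ, (∀ x, 0 ≤ P x) ∧ ∑ x, P x = 1 ∧ v = f P}
      (univ.sup' univ_nonempty g) := by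
  obtain ⟨x₀, -, hx₀⟩ := exists_mem_eq_sup' univ_nonempty g
  refine ⟨⟨Pi.single x₀ 1, (single_mem_stdSimplex ℝ x₀).1, (single_mem_stdSimplex ℝ x₀).2,
    by rw [hsingle, hx₀]⟩, ?_⟩
  rintro _ ⟨P, hP₀, hP₁, rfl⟩
  exact (hle P ⟨hP₀, hP₁⟩).trans (sum_mul_le_sup'_of_mem_stdSimplex ⟨hP₀, hP₁⟩ g)

lemma isGreatest_monotoneOn_comp_of_le_sum_mul [DecidableEq X] (F : X → (X → ℝ) → ℝ)
    (G : X → X → ℝ) (hle : ∀ x', ∀ P ∈ stdSimplex ℝ X, F x' P ≤ ∑ x, P x * G x' x)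
    (hsingle : ∀ x' x, F x' (Pi.single x 1) = G x' x) {φ : ℝ → ℝ} {s : Set ℝ}
    (hφ : MonotoneOn φ s) (hFs : ∀ x', ∀ P ∈ stdSimplex ℝ X, F x' P ∈ s) :
    IsGreatest {v | ∃ x', ∃ P : X → ℝ, (∀ x, 0 ≤ P x) ∧ ∑ x, P x = 1 ∧ v = φ (F x' P)}
      (univ.sup' univ_nonempty fun p : X × X => φ (G p.2 p.1)) := by
  have hGs : ∀ x' x, G x' x ∈ s := fun x' x =>
    hsingle x' x ▸ hFs x' _ (single_mem_stdSimplex ℝ x)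
  obtain ⟨⟨x₀, x'₀⟩, -, hmax⟩ :=
    exists_mem_eq_sup' univ_nonempty fun p : X × X => φ (G p.2 p.1)
  refine ⟨⟨x'₀, Pi.single x₀ 1, (single_mem_stdSimplex ℝ x₀).1,
    (single_mem_stdSimplex ℝ x₀).2, by rw [hsingle, hmax]⟩, ?_⟩
  rintro _ ⟨x', P, hP₀, hP₁, rfl⟩
  obtain ⟨x, -, hx⟩ := exists_mem_eq_sup' univ_nonempty (G x')
  have hFG : F x' P ≤ G x' x :=
    hx ▸ (isGreatest_of_le_sum_mul (F x') (G x') (hle x') (hsingle x')).2 ⟨P, hP₀, hP₁, rfl⟩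
  exact (hφ (hFs x' P ⟨hP₀, hP₁⟩) (hGs x' x) hFG).trans
    (le_sup' (fun p : X × X => φ (G p.2 p.1)) (mem_univ (x, x')))

end SimplexMaximum

section PowerMeanObjective

variable {X Y : Type*} [Fintype X] [Fintype Y] {α β : ℝ}

lemma rpow_rpow_div_of_nonneg {t : ℝ} (ht : 0 ≤ t) (hα : α ≠ 0) :
    (t ^ α) ^ (β / α) = t ^ β := by
  rw [← rpow_mul ht, mul_div_cancel₀ β hα]

lemma sum_mul_rpow_sum_le_sum_mul {c : Y → ℝ} (hc : ∀ y, 0 ≤ c y) {a : X → Y → ℝ}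
    (ha : ∀ x y, 0 ≤ a x y) (hα : 0 < α) (hαβ : α ≤ β) {P : X → ℝ} (hP : P ∈ stdSimplex ℝ X) :
    ∑ y, c y * (∑ x, P x * a x y ^ α) ^ (β / α) ≤ ∑ x, P x * ∑ y, c y * a x y ^ β := by
  have jensen : ∀ y, (∑ x, P x * a x y ^ α) ^ (β / α) ≤ ∑ x, P x * a x y ^ β := fun y => by
    simpa only [rpow_rpow_div_of_nonneg (ha _ y) hα.ne'] using
      rpow_arith_mean_le_arith_mean_rpow univ P (fun x => a x y ^ α) (fun x _ => hP.1 x) hP.2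
        (fun x _ => rpow_nonneg (ha x y) α) ((one_le_div hα).mpr hαβ)
  calc ∑ y, c y * (∑ x, P x * a x y ^ α) ^ (β / α)
      ≤ ∑ y, c y * ∑ x, P x * a x y ^ β :=
        sum_le_sum fun y _ => mul_le_mul_of_nonneg_left (jensen y) (hc y)
    _ = ∑ x, P x * ∑ y, c y * a x y ^ β := by
        simp only [mul_sum]
        rw [sum_comm]
        exact sum_congr rfl fun _ _ => sum_congr rfl fun _ _ => mul_left_comm _ _ _

lemma sum_mul_rpow_sum_single [DecidableEq X] (c : Y → ℝ) {a : X → Y → ℝ}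
    (ha : ∀ x y, 0 ≤ a x y) (hα : α ≠ 0) (x₀ : X) :
    ∑ y, c y * (∑ x, (Pi.single x₀ 1 : X → ℝ) x * a x y ^ α) ^ (β / α) = ∑ y, c y * a x₀ y ^ β := by
  simp only [Pi.single_apply, ite_mul, one_mul, zero_mul, sum_ite_eq', mem_univ, if_true,
    rpow_rpow_div_of_nonneg (ha x₀ _) hα]

lemma sum_mul_rpow_sum_pos [Nonempty Y] {c : Y → ℝ} (hc : ∀ y, 0 < c y) {a : X → Y → ℝ}
    (ha : ∀ x y, 0 < a x y) {P : X → ℝ} (hP : P ∈ stdSimplex ℝ X) :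
    0 < ∑ y, c y * (∑ x, P x * a x y ^ α) ^ (β / α) := by
  obtain ⟨x₁, -, hx₁⟩ := exists_ne_zero_of_sum_ne_zero (hP.2.symm ▸ one_ne_zero : ∑ x, P x ≠ 0)
  refine sum_pos (fun y _ => mul_pos (hc y) (rpow_pos_of_pos ?_ _)) univ_nonempty
  exact sum_pos' (fun x _ => mul_nonneg (hP.1 x) (rpow_nonneg (ha x y).le α))
    ⟨x₁, mem_univ _, mul_pos ((hP.1 x₁).lt_of_ne' hx₁) (rpow_pos_of_pos (ha x₁ y) α)⟩

end PowerMeanObjective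

theorem stmt5_general {X Y : Type*} [Fintype X] [Nonempty X] [Fintype Y] [Nonempty Y]
    (W : X → Y → ℝ) (hW : ∀ x y, 0 < W x y)
    {α β : ℝ} (hα : 1 < α) (hβ : α ≤ β) :
    (∀ x' : X,
      sSup {v : ℝ | ∃ Pt : X → ℝ, (∀ x, 0 ≤ Pt x) ∧ (∑ x, Pt x = 1) ∧
          v = ∑ y, W x' y ^ (1 - β) * (∑ x, Pt x * W x y ^ α) ^ (β / α)}
        = Finset.univ.sup' Finset.univ_nonempty
            (fun x => ∑ y, W x' y ^ (1 - β) * W x y ^ β)) ∧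
    sSup {v : ℝ | ∃ x' : X, ∃ Pt : X → ℝ, (∀ x, 0 ≤ Pt x) ∧ (∑ x, Pt x = 1) ∧
        v = (α / ((α - 1) * β)) *
          Real.log (∑ y, W x' y ^ (1 - β) * (∑ x, Pt x * W x y ^ α) ^ (β / α))}
      = Finset.univ.sup' Finset.univ_nonempty
          (fun p : X × X => (α / ((α - 1) * β)) *
            Real.log (∑ y, W p.2 y ^ (1 - β) * W p.1 y ^ β)) := by
  classical
  have hα₀ : 0 < α := by linarith
  have hweight : ∀ x' y, 0 < W x' y ^ (1 - β) := fun x' y => rpow_pos_of_pos (hW x' y) _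
  have hle : ∀ x', ∀ P ∈ stdSimplex ℝ X,
      ∑ y, W x' y ^ (1 - β) * (∑ x, P x * W x y ^ α) ^ (β / α) ≤
        ∑ x, P x * ∑ y, W x' y ^ (1 - β) * W x y ^ β := fun x' _ hP =>
    sum_mul_rpow_sum_le_sum_mul (fun y => (hweight x' y).le) (fun x y => (hW x y).le) hα₀ hβ hP
  have hsingle : ∀ x' x₀ : X,
      ∑ y, W x' y ^ (1 - β) * (∑ x, (Pi.single x₀ 1 : X → ℝ) x * W x y ^ α) ^ (β / α) =
        ∑ y, W x' y ^ (1 - β) * W x₀ y ^ β := fun x' =>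
    sum_mul_rpow_sum_single _ (fun x y => (hW x y).le) hα₀.ne'
  have hlog : MonotoneOn (fun t => α / ((α - 1) * β) * Real.log t) (Set.Ioi 0) :=
    fun s hs t _ hst => mul_le_mul_of_nonneg_left (log_le_log hs hst)
      (div_nonneg hα₀.le (mul_nonneg (by linarith) (by linarith)))
  exact ⟨fun x' => (isGreatest_of_le_sum_mul _ _ (hle x') (hsingle x')).csSup_eq,
    (isGreatest_monotoneOn_comp_of_le_sum_mul _ _ hle hsingle hlog
      fun x' _ hP => sum_mul_rpow_sum_pos (hweight x') hW hP).csSup_eq⟩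

theorem stmt5 {X Y : Type*} [Fintype X] [Nonempty X] [Fintype Y] [Nonempty Y]
    (W : X → Y → ℝ) (hW : ∀ x y, 0 < W x y) (hWsum : ∀ x, ∑ y, W x y = 1)
    {α β : ℝ} (hα : 1 < α) (hβ : α ≤ β) :
    (∀ x' : X,
      sSup {v : ℝ | ∃ Pt : X → ℝ, (∀ x, 0 ≤ Pt x) ∧ (∑ x, Pt x = 1) ∧
          v = ∑ y, W x' y ^ (1 - β) * (∑ x, Pt x * W x y ^ α) ^ (β / α)}
        = Finset.univ.sup' Finset.univ_nonempty
            (fun x => ∑ y, W x' y ^ (1 - β) * W x y ^ β)) ∧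
    sSup {v : ℝ | ∃ x' : X, ∃ Pt : X → ℝ, (∀ x, 0 ≤ Pt x) ∧ (∑ x, Pt x = 1) ∧
        v = (α / ((α - 1) * β)) *
          Real.log (∑ y, W x' y ^ (1 - β) * (∑ x, Pt x * W x y ^ α) ^ (β / α))}
      = Finset.univ.sup' Finset.univ_nonempty
          (fun p : X × X => (α / ((α - 1) * β)) *
            Real.log (∑ y, W p.2 y ^ (1 - β) * W p.1 y ^ β)) :=
  stmt5_general W hW hα hβ
end

section
/- Setting α = β in the previous simplification, maximal β,β-leakage equals max_{x,x'} (1/(β-1)) log ∑_y W(x',y)^(1-β) W(x,y)^β, i.e., it equals the local Rényi differential privacy of order β. -/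
open Finset Real

theorem stmt6 {X Y : Type*} [Fintype X] [Nonempty X] [Fintype Y] [Nonempty Y]
    (W : X → Y → ℝ) (hW : ∀ x y, 0 < W x y) (hWsum : ∀ x, ∑ y, W x y = 1)
    {β : ℝ} (hβ : 1 < β) :
    sSup {v : ℝ | ∃ x' : X, ∃ Pt : X → ℝ, (∀ x, 0 ≤ Pt x) ∧ (∑ x, Pt x = 1) ∧
        v = (β / ((β - 1) * β)) *
          Real.log (∑ y, W x' y ^ (1 - β) * (∑ x, Pt x * W x y ^ β) ^ (β / β))}
      = Finset.univ.sup' Finset.univ_nonempty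
          (fun p : X × X => (1 / (β - 1)) *
            Real.log (∑ y, W p.2 y ^ (1 - β) * W p.1 y ^ β)) := by
  classical
  have hβ0 : β ≠ 0 := by linarith
  have hβ1 : (0:ℝ) < β - 1 := by linarith
  have hc : β / ((β - 1) * β) = 1 / (β - 1) := by
    field_simp
  set S : X × X → ℝ := fun p => ∑ y, W p.2 y ^ (1 - β) * W p.1 y ^ β with hS
  have hSpos : ∀ p : X × X, 0 < S p := by
    intro p
    apply Finset.sum_pos _ Finset.univ_nonempty
    intro y _
    exact mul_pos (Real.rpow_pos_of_pos (hW _ _) _) (Real.rpow_pos_of_pos (hW _ _) _)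
  set f : X × X → ℝ := fun p => (1 / (β - 1)) * Real.log (S p) with hf
  set M : ℝ := Finset.univ.sup' Finset.univ_nonempty f with hM
  -- membership of M
  obtain ⟨p, -, hp⟩ := Finset.exists_mem_eq_sup' (Finset.univ_nonempty (α := X × X)) f
  have hMmem : M ∈ {v : ℝ | ∃ x' : X, ∃ Pt : X → ℝ, (∀ x, 0 ≤ Pt x) ∧ (∑ x, Pt x = 1) ∧
        v = (β / ((β - 1) * β)) *
          Real.log (∑ y, W x' y ^ (1 - β) * (∑ x, Pt x * W x y ^ β) ^ (β / β))} := by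
    refine ⟨p.2, fun x => if x = p.1 then 1 else 0, ?_, ?_, ?_⟩
    · intro x; dsimp only; split_ifs <;> norm_num
    · simp
    · have : ∀ y, (∑ x, (if x = p.1 then (1:ℝ) else 0) * W x y ^ β) = W p.1 y ^ β := by
        intro y; simp [ite_mul]
      simp_rw [this, div_self hβ0, Real.rpow_one, hc]
      rw [hM, hp]
    -- upper bound
  have hub : ∀ v ∈ {v : ℝ | ∃ x' : X, ∃ Pt : X → ℝ, (∀ x, 0 ≤ Pt x) ∧ (∑ x, Pt x = 1) ∧
        v = (β / ((β - 1) * β)) *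
          Real.log (∑ y, W x' y ^ (1 - β) * (∑ x, Pt x * W x y ^ β) ^ (β / β))}, v ≤ M := by
    rintro v ⟨x', Pt, hPt0, hPt1, rfl⟩
    simp_rw [div_self hβ0, Real.rpow_one, hc]
    have hT : (∑ y, W x' y ^ (1 - β) * ∑ x, Pt x * W x y ^ β)
        = ∑ x, Pt x * S (x, x') := by
      simp_rw [Finset.mul_sum]
      rw [Finset.sum_comm]
      refine Finset.sum_congr rfl fun x _ => ?_
      rw [hS]
      simp only [Finset.mul_sum]
      exact Finset.sum_congr rfl fun y _ => by ring
    rw [hT]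
    -- pick maximizer over x
    obtain ⟨x0, hx0⟩ : ∃ x, Pt x ≠ 0 := by
      by_contra h
      push_neg at h
      simp [h] at hPt1
    have hx0pos : 0 < Pt x0 := lt_of_le_of_ne (hPt0 x0) (Ne.symm hx0)
    obtain ⟨xm, -, hxm⟩ := Finset.exists_max_image (Finset.univ : Finset X)
      (fun x => S (x, x')) Finset.univ_nonempty
    have hTpos : 0 < ∑ x, Pt x * S (x, x') := by
      refine Finset.sum_pos' (fun x _ => mul_nonneg (hPt0 x) (hSpos _).le) ?_
      exact ⟨x0, Finset.mem_univ _, mul_pos hx0pos (hSpos _)⟩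
    have hTle : (∑ x, Pt x * S (x, x')) ≤ S (xm, x') := by
      calc (∑ x, Pt x * S (x, x')) ≤ ∑ x, Pt x * S (xm, x') := by
            refine Finset.sum_le_sum fun x _ => ?_
            exact mul_le_mul_of_nonneg_left (hxm x (Finset.mem_univ x)) (hPt0 x)
        _ = S (xm, x') := by rw [← Finset.sum_mul, hPt1, one_mul]
    have hlog : Real.log (∑ x, Pt x * S (x, x')) ≤ Real.log (S (xm, x')) :=
      Real.log_le_log hTpos hTle
    calc (1 / (β - 1)) * Real.log (∑ x, Pt x * S (x, x'))
        ≤ (1 / (β - 1)) * Real.log (S (xm, x')) := by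
          exact mul_le_mul_of_nonneg_left hlog (by positivity)
      _ = f (xm, x') := rfl
      _ ≤ M := Finset.le_sup' f (Finset.mem_univ _)
  exact le_antisymm (csSup_le ⟨M, hMmem⟩ hub) (le_csSup ⟨M, hub⟩ hMmem)
end

section
/- Post-processing inequality (inner sum form): let X, Y, Z be finite sets, W : X → dist(Y) and K : Y → dist(Z) channels, and let V(x,z) = ∑_y W(x,y) K(y,z) be the composed channel. For α > 1, β ≥ 1, any probability distribution P̃ on X and any distribution P_Y on Y with induced P_Z(z) = ∑_y P_Y(y) K(y,z), we have ∑_z P_Z(z)^(1-β) (∑_x P̃(x) V(x,z)^α)^(β/α) ≤ ∑_y P_Y(y)^(1-β) (∑_x P̃(x) W(x,y)^α)^(β/α) (with the convention that terms with zero base are handled by full-support assumptions). -/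
open Finset Real

theorem minkowski_sum' {ι κ : Type*} (s : Finset ι) (t : Finset κ)
    (f : ι → κ → ℝ) (hf : ∀ i k, 0 ≤ f i k) {p : ℝ} (hp : 1 ≤ p) :
    (∑ k ∈ t, (∑ i ∈ s, f i k) ^ p) ^ (1 / p) ≤ ∑ i ∈ s, (∑ k ∈ t, f i k ^ p) ^ (1 / p) := by
  have hp0 : 0 < p := lt_of_lt_of_le one_pos hp
  classical
  induction s using Finset.induction with
  | empty =>
    simp [Real.zero_rpow hp0.ne', Real.zero_rpow (by positivity : (1 / p) ≠ 0), Real.zero_rpow (by positivity : p⁻¹ ≠ 0)]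
  | @insert a s ha ih =>
    simp only [Finset.sum_insert ha]
    calc (∑ k ∈ t, (f a k + ∑ i ∈ s, f i k) ^ p) ^ (1 / p)
        = (∑ k ∈ t, |f a k + ∑ i ∈ s, f i k| ^ p) ^ (1 / p) := by
          congr 1; refine Finset.sum_congr rfl fun k _ => ?_
          rw [abs_of_nonneg (add_nonneg (hf a k) (Finset.sum_nonneg fun i _ => hf i k))]
      _ ≤ (∑ k ∈ t, |f a k| ^ p) ^ (1 / p) + (∑ k ∈ t, |∑ i ∈ s, f i k| ^ p) ^ (1 / p) :=
          Real.Lp_add_le t _ _ hp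
      _ = (∑ k ∈ t, f a k ^ p) ^ (1 / p) + (∑ k ∈ t, (∑ i ∈ s, f i k) ^ p) ^ (1 / p) := by
          congr 1 <;> (congr 1; refine Finset.sum_congr rfl fun k _ => ?_)
          · rw [abs_of_nonneg (hf a k)]
          · rw [abs_of_nonneg (Finset.sum_nonneg fun i _ => hf i k)]
      _ ≤ _ := add_le_add (le_refl _) ih

theorem stmt8 {X Y Z : Type*} [Fintype X] [Nonempty X] [Fintype Y] [Nonempty Y]
    [Fintype Z] [Nonempty Z]
    (W : X → Y → ℝ) (hW : ∀ x y, 0 < W x y) (hWsum : ∀ x, ∑ y, W x y = 1)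
    (K : Y → Z → ℝ) (hK : ∀ y z, 0 < K y z) (hKsum : ∀ y, ∑ z, K y z = 1)
    (PY : Y → ℝ) (hPY : ∀ y, 0 < PY y) (hPYsum : ∑ y, PY y = 1)
    (Pt : X → ℝ) (hPt : ∀ x, 0 ≤ Pt x) (hPtsum : ∑ x, Pt x = 1)
    {α β : ℝ} (hα : 1 < α) (hβ : 1 ≤ β) :
    ∑ z, (∑ y, PY y * K y z) ^ (1 - β) *
        (∑ x, Pt x * (∑ y, W x y * K y z) ^ α) ^ (β / α)
      ≤ ∑ y, PY y ^ (1 - β) * (∑ x, Pt x * W x y ^ α) ^ (β / α) := by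
  have hα0 : 0 < α := lt_trans one_pos hα
  have hβ0 : 0 < β := lt_of_lt_of_le one_pos hβ
  -- positivity facts
  have hSA : ∀ y, 0 < ∑ x, Pt x * W x y ^ α := by
    intro y
    obtain ⟨x0, hx0⟩ : ∃ x, 0 < Pt x := by
      by_contra h; push_neg at h
      have : ∑ x, Pt x = 0 :=
        Finset.sum_eq_zero fun x _ => le_antisymm (h x) (hPt x)
      rw [this] at hPtsum; norm_num at hPtsum
    refine Finset.sum_pos' (fun x _ => ?_) ⟨x0, Finset.mem_univ x0, ?_⟩
    · exact mul_nonneg (hPt x) (Real.rpow_nonneg (hW x y).le α)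
    · exact mul_pos hx0 (Real.rpow_pos_of_pos (hW x0 y) α)
  set A : Y → ℝ := fun y => (∑ x, Pt x * W x y ^ α) ^ (1 / α) with hAdef
  have hA : ∀ y, 0 < A y := fun y => Real.rpow_pos_of_pos (hSA y) _
  have hPZ : ∀ z, 0 < ∑ y, PY y * K y z := fun z =>
    Finset.sum_pos (fun y _ => mul_pos (hPY y) (hK y z)) univ_nonempty
  have hV : ∀ x z, 0 < ∑ y, W x y * K y z := fun x z =>
    Finset.sum_pos (fun y _ => mul_pos (hW x y) (hK y z)) univ_nonempty
  have hSV : ∀ z, 0 ≤ ∑ x, Pt x * (∑ y, W x y * K y z) ^ α := fun z =>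
    Finset.sum_nonneg fun x _ => mul_nonneg (hPt x) (Real.rpow_nonneg (hV x z).le α)
  -- Step 1: Minkowski
  have step1 : ∀ z, (∑ x, Pt x * (∑ y, W x y * K y z) ^ α) ^ (1 / α)
      ≤ ∑ y, K y z * A y := by
    intro z
    have key := minkowski_sum' (Finset.univ : Finset Y) (Finset.univ : Finset X)
      (fun y x => Pt x ^ (1 / α) * (W x y * K y z))
      (fun y x => mul_nonneg (Real.rpow_nonneg (hPt x) _) (mul_pos (hW x y) (hK y z)).le)
      hα.le
    have eL : ∀ x, (∑ y, Pt x ^ (1 / α) * (W x y * K y z)) ^ α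
        = Pt x * (∑ y, W x y * K y z) ^ α := by
      intro x
      rw [← Finset.mul_sum, Real.mul_rpow (Real.rpow_nonneg (hPt x) _) (hV x z).le,
        ← Real.rpow_mul (hPt x), one_div_mul_cancel hα0.ne', Real.rpow_one]
    have eR : ∀ y, (∑ x, (Pt x ^ (1 / α) * (W x y * K y z)) ^ α) ^ (1 / α)
        = K y z * A y := by
      intro y
      have : ∀ x, (Pt x ^ (1 / α) * (W x y * K y z)) ^ α
          = K y z ^ α * (Pt x * W x y ^ α) := by
        intro x
        rw [Real.mul_rpow (Real.rpow_nonneg (hPt x) _) (mul_pos (hW x y) (hK y z)).le,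
          Real.mul_rpow (hW x y).le (hK y z).le,
          ← Real.rpow_mul (hPt x), one_div_mul_cancel hα0.ne', Real.rpow_one]
        ring
      simp_rw [this]
      rw [← Finset.mul_sum,
        Real.mul_rpow (Real.rpow_nonneg (hK y z).le _) (hSA y).le,
        ← Real.rpow_mul (hK y z).le, mul_one_div, div_self hα0.ne', Real.rpow_one]
    calc (∑ x, Pt x * (∑ y, W x y * K y z) ^ α) ^ (1 / α)
        = (∑ x, (∑ y, Pt x ^ (1 / α) * (W x y * K y z)) ^ α) ^ (1 / α) := by
          simp_rw [eL]
      _ ≤ ∑ y, (∑ x, (Pt x ^ (1 / α) * (W x y * K y z)) ^ α) ^ (1 / α) := key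
      _ = ∑ y, K y z * A y := by simp_rw [eR]
  -- Step 2: per-z bound via Jensen
  have step2 : ∀ z, (∑ y, PY y * K y z) ^ (1 - β) *
      (∑ x, Pt x * (∑ y, W x y * K y z) ^ α) ^ (β / α)
      ≤ ∑ y, PY y * K y z * (A y / PY y) ^ β := by
    intro z
    have hKA : 0 ≤ ∑ y, K y z * A y :=
      Finset.sum_nonneg fun y _ => mul_nonneg (hK y z).le (hA y).le
    have h1 : (∑ x, Pt x * (∑ y, W x y * K y z) ^ α) ^ (β / α)
        ≤ (∑ y, K y z * A y) ^ β := by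
      have e : (∑ x, Pt x * (∑ y, W x y * K y z) ^ α) ^ (β / α)
          = ((∑ x, Pt x * (∑ y, W x y * K y z) ^ α) ^ (1 / α)) ^ β := by
        rw [← Real.rpow_mul (hSV z), one_div_mul_eq_div]
      rw [e]
      exact Real.rpow_le_rpow (Real.rpow_nonneg (hSV z) _) (step1 z) hβ0.le
    have hPZ' := hPZ z
    have h2 : (∑ y, PY y * K y z) ^ (1 - β) * (∑ y, K y z * A y) ^ β
        ≤ ∑ y, PY y * K y z * (A y / PY y) ^ β := by
      have hw : ∑ y, PY y * K y z / (∑ y, PY y * K y z) = 1 := by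
        rw [← Finset.sum_div, div_self hPZ'.ne']
      have jensen := Real.rpow_arith_mean_le_arith_mean_rpow Finset.univ
        (fun y => PY y * K y z / (∑ y, PY y * K y z)) (fun y => A y / PY y)
        (fun y _ => div_nonneg (mul_pos (hPY y) (hK y z)).le hPZ'.le) hw
        (fun y _ => (div_pos (hA y) (hPY y)).le) hβ
      have ew : ∀ y, (PY y * K y z / (∑ y, PY y * K y z)) * (A y / PY y)
          = K y z * A y / (∑ y, PY y * K y z) := fun y => by
        field_simp [(hPY y).ne', hPZ'.ne']
      calc (∑ y, PY y * K y z) ^ (1 - β) * (∑ y, K y z * A y) ^ β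
          = (∑ y, PY y * K y z) *
              ((∑ y, K y z * A y) / (∑ y, PY y * K y z)) ^ β := by
            rw [Real.div_rpow hKA hPZ'.le, Real.rpow_sub hPZ', Real.rpow_one]
            ring
        _ = (∑ y, PY y * K y z) *
              (∑ y, (PY y * K y z / (∑ y, PY y * K y z)) * (A y / PY y)) ^ β := by
            simp_rw [ew]
            rw [← Finset.sum_div]
        _ ≤ (∑ y, PY y * K y z) *
              ∑ y, (PY y * K y z / (∑ y, PY y * K y z)) * (A y / PY y) ^ β :=
            mul_le_mul_of_nonneg_left jensen hPZ'.le
        _ = ∑ y, PY y * K y z * (A y / PY y) ^ β := by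
            rw [Finset.mul_sum]
            refine Finset.sum_congr rfl fun y _ => ?_
            field_simp [(hPY y).ne', hPZ'.ne']
    calc (∑ y, PY y * K y z) ^ (1 - β) *
          (∑ x, Pt x * (∑ y, W x y * K y z) ^ α) ^ (β / α)
        ≤ (∑ y, PY y * K y z) ^ (1 - β) * (∑ y, K y z * A y) ^ β :=
          mul_le_mul_of_nonneg_left h1 (Real.rpow_nonneg hPZ'.le _)
      _ ≤ _ := h2
  -- sum over z and finish
  calc ∑ z, (∑ y, PY y * K y z) ^ (1 - β) *
        (∑ x, Pt x * (∑ y, W x y * K y z) ^ α) ^ (β / α)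
      ≤ ∑ z, ∑ y, PY y * K y z * (A y / PY y) ^ β :=
        Finset.sum_le_sum fun z _ => step2 z
    _ = ∑ y, PY y * (A y / PY y) ^ β := by
        rw [Finset.sum_comm]
        refine Finset.sum_congr rfl fun y _ => ?_
        calc ∑ z, PY y * K y z * (A y / PY y) ^ β
            = (PY y * (A y / PY y) ^ β) * ∑ z, K y z := by
              rw [Finset.mul_sum]
              exact Finset.sum_congr rfl fun z _ => by ring
          _ = PY y * (A y / PY y) ^ β := by rw [hKsum y, mul_one]
    _ = ∑ y, PY y ^ (1 - β) * (∑ x, Pt x * W x y ^ α) ^ (β / α) := by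
        refine Finset.sum_congr rfl fun y _ => ?_
        have hAβ : A y ^ β = (∑ x, Pt x * W x y ^ α) ^ (β / α) := by
          rw [hAdef]
          dsimp only
          rw [← Real.rpow_mul (hSA y).le, one_div_mul_eq_div]
        rw [Real.div_rpow (hA y).le (hPY y).le, hAβ, Real.rpow_sub (hPY y),
          Real.rpow_one]
        ring
end

section
/- Additivity of the core expression: let X₁, Y₁, X₂, Y₂ be finite sets with channels W₁ : X₁ → dist(Y₁) and W₂ : X₂ → dist(Y₂) having full support, α > 1, β ≥ 1. Then for any x₁' ∈ X₁, x₂' ∈ X₂: sup over joint probability distributions P̃ on X₁ × X₂ of ∑_{y₁,y₂} W₁(x₁',y₁)^(1-β) W₂(x₂',y₂)^(1-β) (∑_{x₁,x₂} P̃(x₁,x₂) W₁(x₁,y₁)^α W₂(x₂,y₂)^α)^(β/α) equals the product over i = 1,2 of sup over distributions P̃ᵢ on Xᵢ of ∑_{yᵢ} Wᵢ(xᵢ',yᵢ)^(1-β) (∑_{xᵢ} P̃ᵢ(xᵢ) Wᵢ(xᵢ,yᵢ)^α)^(β/α). Consequently L_{α,β}(X₁,X₂ → Y₁,Y₂) =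 L_{α,β}(X₁→Y₁) + L_{α,β}(X₂→Y₂) when (X₁,Y₁) and (X₂,Y₂) are independent. -/
open Finset Real

section Generic
variable {X Y : Type*} [Fintype X] [Nonempty X] [Fintype Y] [Nonempty Y]

noncomputable def Gfun (a : Y → ℝ) (u : X → Y → ℝ) (r : ℝ) (P : X → ℝ) : ℝ :=
  ∑ y, a y * (∑ x, P x * u x y) ^ r

def SSetR (a : Y → ℝ) (u : X → Y → ℝ) (r : ℝ) : Set ℝ :=
  {v | ∃ P : X → ℝ, (∀ x, 0 ≤ P x) ∧ (∑ x, P x = 1) ∧ v = Gfun a u r P}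

lemma sum_inner_pos {u : X → Y → ℝ} (hu : ∀ x y, 0 < u x y) {P : X → ℝ}
    (hP0 : ∀ x, 0 ≤ P x) (hP1 : ∑ x, P x = 1) (y : Y) : 0 < ∑ x, P x * u x y := by
  obtain ⟨x₀, hx₀⟩ : ∃ x, 0 < P x := by
    by_contra h
    push_neg at h
    have : ∑ x, P x = 0 := Finset.sum_eq_zero fun x _ => le_antisymm (h x) (hP0 x)
    rw [this] at hP1; norm_num at hP1
  exact Finset.sum_pos' (fun x _ => mul_nonneg (hP0 x) (hu x y).le)
    ⟨x₀, Finset.mem_univ _, mul_pos hx₀ (hu x₀ y)⟩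

lemma Gfun_pos {a : Y → ℝ} {u : X → Y → ℝ} {r : ℝ} (ha : ∀ y, 0 < a y)
    (hu : ∀ x y, 0 < u x y) {P : X → ℝ} (hP0 : ∀ x, 0 ≤ P x) (hP1 : ∑ x, P x = 1) :
    0 < Gfun a u r P :=
  Finset.sum_pos (fun y _ => mul_pos (ha y)
    (Real.rpow_pos_of_pos (sum_inner_pos hu hP0 hP1 y) r)) Finset.univ_nonempty

lemma Gfun_continuous (a : Y → ℝ) (u : X → Y → ℝ) {r : ℝ} (hr : 0 < r) :
    Continuous (Gfun a u r) := by
  refine continuous_finset_sum _ fun y _ => continuous_const.mul ?_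
  have h1 : Continuous fun P : X → ℝ => ∑ x, P x * u x y :=
    continuous_finset_sum _ fun x _ => (continuous_apply x).mul continuous_const
  have h2 : Continuous fun t : ℝ => t ^ r := by
    rw [continuous_iff_continuousAt]
    exact fun t => Real.continuousAt_rpow_const t r (Or.inr hr.le)
  exact h2.comp h1

lemma SSetR_isGreatest (a : Y → ℝ) (u : X → Y → ℝ) {r : ℝ} (hr : 0 < r) :
    IsGreatest (SSetR a u r) (sSup (SSetR a u r)) := by
  have himg : SSetR a u r = Gfun a u r '' stdSimplex ℝ X := by
    ext v
    constructor
    · rintro ⟨P, h0, h1, rfl⟩; exact ⟨P, ⟨h0, h1⟩, rfl⟩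
    · rintro ⟨P, ⟨h0, h1⟩, rfl⟩; exact ⟨P, h0, h1, rfl⟩
  have hne : (stdSimplex ℝ X).Nonempty := by
    refine ⟨fun _ => (Fintype.card X : ℝ)⁻¹, fun x => by positivity, ?_⟩
    have : (Fintype.card X : ℝ) ≠ 0 := by
      simp [Fintype.card_ne_zero]
    simp [Finset.sum_const, nsmul_eq_mul, mul_inv_cancel₀ this]
  obtain ⟨P₀, hP₀, hmax⟩ := (isCompact_stdSimplex ℝ X).exists_isMaxOn hne
    (Gfun_continuous a u hr).continuousOn
  have hg : IsGreatest (SSetR a u r) (Gfun a u r P₀) := by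
    constructor
    · rw [himg]; exact ⟨P₀, hP₀, rfl⟩
    · rw [himg]; rintro v ⟨P, hP, rfl⟩; exact hmax hP
  rw [hg.csSup_eq]; exact hg

lemma sSup_SSetR_pos {a : Y → ℝ} {u : X → Y → ℝ} {r : ℝ} (ha : ∀ y, 0 < a y)
    (hu : ∀ x y, 0 < u x y) (hr : 0 < r) : 0 < sSup (SSetR a u r) := by
  obtain ⟨P, h0, h1, hv⟩ := (SSetR_isGreatest a u hr).1
  rw [hv]; exact Gfun_pos ha hu h0 h1

end Generic
set_option linter.unusedSectionVars false
section Two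
variable {X₁ Y₁ X₂ Y₂ : Type*}
    [Fintype X₁] [Nonempty X₁] [Fintype Y₁] [Nonempty Y₁]
    [Fintype X₂] [Nonempty X₂] [Fintype Y₂] [Nonempty Y₂]
    (a₁ : Y₁ → ℝ) (u₁ : X₁ → Y₁ → ℝ) (a₂ : Y₂ → ℝ) (u₂ : X₂ → Y₂ → ℝ) (r : ℝ)

lemma joint_val (Pt : X₁ × X₂ → ℝ) :
    Gfun (fun y : Y₁ × Y₂ => a₁ y.1 * a₂ y.2)
      (fun (x : X₁ × X₂) (y : Y₁ × Y₂) => u₁ x.1 y.1 * u₂ x.2 y.2) r Pt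
      = ∑ y₁, ∑ y₂, a₁ y₁ * a₂ y₂ *
          (∑ x₁, ∑ x₂, Pt (x₁, x₂) * (u₁ x₁ y₁ * u₂ x₂ y₂)) ^ r := by
  rw [Gfun, Fintype.sum_prod_type]
  refine Finset.sum_congr rfl fun y₁ _ => Finset.sum_congr rfl fun y₂ _ => ?_
  rw [Fintype.sum_prod_type]

lemma prod_val (hu₁ : ∀ x y, 0 < u₁ x y) (hu₂ : ∀ x y, 0 < u₂ x y)
    {P₁ : X₁ → ℝ} {P₂ : X₂ → ℝ} (hP₁0 : ∀ x, 0 ≤ P₁ x) (hP₂0 : ∀ x, 0 ≤ P₂ x) :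
    Gfun (fun y : Y₁ × Y₂ => a₁ y.1 * a₂ y.2)
      (fun (x : X₁ × X₂) (y : Y₁ × Y₂) => u₁ x.1 y.1 * u₂ x.2 y.2) r
      (fun p => P₁ p.1 * P₂ p.2)
      = Gfun a₁ u₁ r P₁ * Gfun a₂ u₂ r P₂ := by
  rw [joint_val, Gfun, Gfun, Finset.sum_mul_sum]
  refine Finset.sum_congr rfl fun y₁ _ => Finset.sum_congr rfl fun y₂ _ => ?_
  have hinner : (∑ x₁, ∑ x₂, P₁ x₁ * P₂ x₂ * (u₁ x₁ y₁ * u₂ x₂ y₂))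
      = (∑ x₁, P₁ x₁ * u₁ x₁ y₁) * (∑ x₂, P₂ x₂ * u₂ x₂ y₂) := by
    rw [Finset.sum_mul_sum]
    exact Finset.sum_congr rfl fun x₁ _ => Finset.sum_congr rfl fun x₂ _ => by ring
  rw [hinner,
    Real.mul_rpow (Finset.sum_nonneg fun x₁ _ => mul_nonneg (hP₁0 x₁) (hu₁ x₁ y₁).le)
      (Finset.sum_nonneg fun x₂ _ => mul_nonneg (hP₂0 x₂) (hu₂ x₂ y₂).le)]
  ring

lemma key_ineq (ha₁ : ∀ y, 0 < a₁ y) (hu₁ : ∀ x y, 0 < u₁ x y)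
    (ha₂ : ∀ y, 0 < a₂ y) (hu₂ : ∀ x y, 0 < u₂ x y) (hr : 0 < r)
    {Pt : X₁ × X₂ → ℝ} (h0 : ∀ p, 0 ≤ Pt p) (h1 : ∑ p, Pt p = 1) :
    Gfun (fun y : Y₁ × Y₂ => a₁ y.1 * a₂ y.2)
      (fun (x : X₁ × X₂) (y : Y₁ × Y₂) => u₁ x.1 y.1 * u₂ x.2 y.2) r Pt
      ≤ sSup (SSetR a₁ u₁ r) * sSup (SSetR a₂ u₂ r) := by
  set P₁ : X₁ → ℝ := fun x₁ => ∑ x₂, Pt (x₁, x₂) with hP₁def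
  have hP₁0 : ∀ x, 0 ≤ P₁ x := fun x => Finset.sum_nonneg fun x₂ _ => h0 _
  have hP₁1 : ∑ x₁, P₁ x₁ = 1 := by
    rw [← h1, Fintype.sum_prod_type]
  set c : Y₁ → ℝ := fun y₁ => ∑ x₁, P₁ x₁ * u₁ x₁ y₁ with hcdef
  have hc : ∀ y₁, 0 < c y₁ := fun y₁ => sum_inner_pos hu₁ hP₁0 hP₁1 y₁
  set R : Y₁ → X₂ → ℝ := fun y₁ x₂ => (∑ x₁, Pt (x₁, x₂) * u₁ x₁ y₁) / c y₁ with hRdef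
  have hR0 : ∀ y₁ x₂, 0 ≤ R y₁ x₂ := fun y₁ x₂ =>
    div_nonneg (Finset.sum_nonneg fun x₁ _ => mul_nonneg (h0 _) (hu₁ x₁ y₁).le) (hc y₁).le
  have hR1 : ∀ y₁, ∑ x₂, R y₁ x₂ = 1 := by
    intro y₁
    rw [hRdef]
    simp only
    rw [← Finset.sum_div, Finset.sum_comm]
    have : ∀ x₁ ∈ Finset.univ, ∑ x₂, Pt (x₁, x₂) * u₁ x₁ y₁ = P₁ x₁ * u₁ x₁ y₁ := by
      intro x₁ _
      rw [hP₁def, Finset.sum_mul]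
    rw [Finset.sum_congr rfl this]
    exact div_self (hc y₁).ne'
  have hT : ∀ y₁ y₂, (∑ x₁, ∑ x₂, Pt (x₁, x₂) * (u₁ x₁ y₁ * u₂ x₂ y₂))
      = c y₁ * ∑ x₂, R y₁ x₂ * u₂ x₂ y₂ := by
    intro y₁ y₂
    rw [Finset.mul_sum, Finset.sum_comm]
    refine Finset.sum_congr rfl fun x₂ _ => ?_
    rw [hRdef]
    simp only
    rw [div_mul_eq_mul_div, mul_div_assoc', mul_comm (c y₁), mul_div_assoc,
      div_self (hc y₁).ne', mul_one, Finset.sum_mul]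
    exact Finset.sum_congr rfl fun x₁ _ => by ring
  have hS₂ub := (SSetR_isGreatest a₂ u₂ hr).2
  have hS₂pos := sSup_SSetR_pos ha₂ hu₂ hr
  have step2 : ∀ y₁, ∑ y₂, a₂ y₂ * (c y₁ * ∑ x₂, R y₁ x₂ * u₂ x₂ y₂) ^ r
      ≤ c y₁ ^ r * sSup (SSetR a₂ u₂ r) := by
    intro y₁
    have hmem : Gfun a₂ u₂ r (R y₁) ∈ SSetR a₂ u₂ r := ⟨R y₁, hR0 y₁, hR1 y₁, rfl⟩
    have : ∑ y₂, a₂ y₂ * (c y₁ * ∑ x₂, R y₁ x₂ * u₂ x₂ y₂) ^ r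
        = c y₁ ^ r * Gfun a₂ u₂ r (R y₁) := by
      rw [Gfun, Finset.mul_sum]
      refine Finset.sum_congr rfl fun y₂ _ => ?_
      rw [Real.mul_rpow (hc y₁).le
        (Finset.sum_nonneg fun x₂ _ => mul_nonneg (hR0 y₁ x₂) (hu₂ x₂ y₂).le)]
      ring
    rw [this]
    exact mul_le_mul_of_nonneg_left (hS₂ub hmem) (Real.rpow_pos_of_pos (hc y₁) r).le
  have e1 : ∑ y₁, ∑ y₂, a₁ y₁ * a₂ y₂ *
      (∑ x₁, ∑ x₂, Pt (x₁, x₂) * (u₁ x₁ y₁ * u₂ x₂ y₂)) ^ r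
      = ∑ y₁, a₁ y₁ * ∑ y₂, a₂ y₂ * (c y₁ * ∑ x₂, R y₁ x₂ * u₂ x₂ y₂) ^ r := by
    refine Finset.sum_congr rfl fun y₁ _ => ?_
    rw [Finset.mul_sum]
    refine Finset.sum_congr rfl fun y₂ _ => ?_
    rw [hT y₁ y₂]; ring
  rw [joint_val, e1]
  have e2 : ∑ y₁, a₁ y₁ * (c y₁ ^ r * sSup (SSetR a₂ u₂ r))
      = Gfun a₁ u₁ r P₁ * sSup (SSetR a₂ u₂ r) := by
    rw [Gfun, Finset.sum_mul]
    exact Finset.sum_congr rfl fun y₁ _ => by ring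
  refine le_trans (Finset.sum_le_sum fun y₁ _ =>
    mul_le_mul_of_nonneg_left (step2 y₁) (ha₁ y₁).le) ?_
  rw [e2]
  exact mul_le_mul_of_nonneg_right ((SSetR_isGreatest a₁ u₁ hr).2 ⟨P₁, hP₁0, hP₁1, rfl⟩)
    hS₂pos.le

lemma pair_eq (ha₁ : ∀ y, 0 < a₁ y) (hu₁ : ∀ x y, 0 < u₁ x y)
    (ha₂ : ∀ y, 0 < a₂ y) (hu₂ : ∀ x y, 0 < u₂ x y) (hr : 0 < r) :
    sSup (SSetR (fun y : Y₁ × Y₂ => a₁ y.1 * a₂ y.2)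
      (fun (x : X₁ × X₂) (y : Y₁ × Y₂) => u₁ x.1 y.1 * u₂ x.2 y.2) r)
      = sSup (SSetR a₁ u₁ r) * sSup (SSetR a₂ u₂ r) := by
  apply le_antisymm
  · apply csSup_le
    · obtain ⟨v, hv⟩ := (SSetR_isGreatest (fun y : Y₁ × Y₂ => a₁ y.1 * a₂ y.2)
        (fun (x : X₁ × X₂) (y : Y₁ × Y₂) => u₁ x.1 y.1 * u₂ x.2 y.2) hr).1
      exact ⟨_, ⟨v, hv⟩⟩
    · rintro v ⟨Pt, h0, h1, rfl⟩
      exact key_ineq a₁ u₁ a₂ u₂ r ha₁ hu₁ ha₂ hu₂ hr h0 h1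
  · obtain ⟨P₁, hP₁0, hP₁1, hv₁⟩ := (SSetR_isGreatest a₁ u₁ hr).1
    obtain ⟨P₂, hP₂0, hP₂1, hv₂⟩ := (SSetR_isGreatest a₂ u₂ hr).1
    have hPt0 : ∀ p : X₁ × X₂, 0 ≤ P₁ p.1 * P₂ p.2 :=
      fun p => mul_nonneg (hP₁0 p.1) (hP₂0 p.2)
    have hPt1 : ∑ p : X₁ × X₂, P₁ p.1 * P₂ p.2 = 1 := by
      rw [Fintype.sum_prod_type]
      simp only [← Finset.mul_sum, hP₂1, mul_one, hP₁1]
    have hmem : sSup (SSetR a₁ u₁ r) * sSup (SSetR a₂ u₂ r)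
        ∈ SSetR (fun y : Y₁ × Y₂ => a₁ y.1 * a₂ y.2)
          (fun (x : X₁ × X₂) (y : Y₁ × Y₂) => u₁ x.1 y.1 * u₂ x.2 y.2) r := by
      refine ⟨fun p => P₁ p.1 * P₂ p.2, hPt0, hPt1, ?_⟩
      rw [prod_val a₁ u₁ a₂ u₂ r hu₁ hu₂ hP₁0 hP₂0, hv₁, hv₂]
    exact (SSetR_isGreatest _ _ hr).2 hmem

end Two
theorem stmt10 {X₁ Y₁ X₂ Y₂ : Type*}
    [Fintype X₁] [Nonempty X₁] [Fintype Y₁] [Nonempty Y₁]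
    [Fintype X₂] [Nonempty X₂] [Fintype Y₂] [Nonempty Y₂]
    (W₁ : X₁ → Y₁ → ℝ) (hW₁ : ∀ x y, 0 < W₁ x y) (hW₁sum : ∀ x, ∑ y, W₁ x y = 1)
    (W₂ : X₂ → Y₂ → ℝ) (hW₂ : ∀ x y, 0 < W₂ x y) (hW₂sum : ∀ x, ∑ y, W₂ x y = 1)
    {α β : ℝ} (hα : 1 < α) (hβ : 1 ≤ β) :
    (∀ x₁' : X₁, ∀ x₂' : X₂,
      sSup {v : ℝ | ∃ Pt : X₁ × X₂ → ℝ, (∀ p, 0 ≤ Pt p) ∧ (∑ p, Pt p = 1) ∧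
          v = ∑ y₁, ∑ y₂, W₁ x₁' y₁ ^ (1 - β) * W₂ x₂' y₂ ^ (1 - β) *
            (∑ x₁, ∑ x₂, Pt (x₁, x₂) * (W₁ x₁ y₁ ^ α * W₂ x₂ y₂ ^ α)) ^ (β / α)}
        = (sSup {v : ℝ | ∃ Pt₁ : X₁ → ℝ, (∀ x, 0 ≤ Pt₁ x) ∧ (∑ x, Pt₁ x = 1) ∧
              v = ∑ y₁, W₁ x₁' y₁ ^ (1 - β) * (∑ x₁, Pt₁ x₁ * W₁ x₁ y₁ ^ α) ^ (β / α)})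
          * (sSup {v : ℝ | ∃ Pt₂ : X₂ → ℝ, (∀ x, 0 ≤ Pt₂ x) ∧ (∑ x, Pt₂ x = 1) ∧
              v = ∑ y₂, W₂ x₂' y₂ ^ (1 - β) * (∑ x₂, Pt₂ x₂ * W₂ x₂ y₂ ^ α) ^ (β / α)})) ∧
    sSup {v : ℝ | ∃ x₁' : X₁, ∃ x₂' : X₂, ∃ Pt : X₁ × X₂ → ℝ,
        (∀ p, 0 ≤ Pt p) ∧ (∑ p, Pt p = 1) ∧
        v = (α / ((α - 1) * β)) * Real.log
          (∑ y₁, ∑ y₂, W₁ x₁' y₁ ^ (1 - β) * W₂ x₂' y₂ ^ (1 - β) *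
            (∑ x₁, ∑ x₂, Pt (x₁, x₂) * (W₁ x₁ y₁ ^ α * W₂ x₂ y₂ ^ α)) ^ (β / α))}
      = sSup {v : ℝ | ∃ x₁' : X₁, ∃ Pt₁ : X₁ → ℝ, (∀ x, 0 ≤ Pt₁ x) ∧ (∑ x, Pt₁ x = 1) ∧
            v = (α / ((α - 1) * β)) * Real.log
              (∑ y₁, W₁ x₁' y₁ ^ (1 - β) * (∑ x₁, Pt₁ x₁ * W₁ x₁ y₁ ^ α) ^ (β / α))}
        + sSup {v : ℝ | ∃ x₂' : X₂, ∃ Pt₂ : X₂ → ℝ, (∀ x, 0 ≤ Pt₂ x) ∧ (∑ x, Pt₂ x = 1) ∧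
            v = (α / ((α - 1) * β)) * Real.log
              (∑ y₂, W₂ x₂' y₂ ^ (1 - β) * (∑ x₂, Pt₂ x₂ * W₂ x₂ y₂ ^ α) ^ (β / α))} := by
  have hα0 : (0:ℝ) < α := lt_trans one_pos hα
  have hβ0 : (0:ℝ) < β := lt_of_lt_of_le one_pos hβ
  have hr : 0 < β / α := div_pos hβ0 hα0
  -- abbreviations
  set A₁ : X₁ → ℝ := fun x' =>
    sSup (SSetR (fun y => W₁ x' y ^ (1 - β)) (fun x y => W₁ x y ^ α) (β / α)) with hA₁def
  set A₂ : X₂ → ℝ := fun x' =>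
    sSup (SSetR (fun y => W₂ x' y ^ (1 - β)) (fun x y => W₂ x y ^ α) (β / α)) with hA₂def
  have ha₁ : ∀ x' y, 0 < W₁ x' y ^ (1 - β) := fun x' y => Real.rpow_pos_of_pos (hW₁ x' y) _
  have ha₂ : ∀ x' y, 0 < W₂ x' y ^ (1 - β) := fun x' y => Real.rpow_pos_of_pos (hW₂ x' y) _
  have hu₁ : ∀ x y, 0 < W₁ x y ^ α := fun x y => Real.rpow_pos_of_pos (hW₁ x y) _
  have hu₂ : ∀ x y, 0 < W₂ x y ^ α := fun x y => Real.rpow_pos_of_pos (hW₂ x y) _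
  -- the one-channel sets are literally SSetR sets
  have hset₁ : ∀ x₁' : X₁, {v : ℝ | ∃ Pt₁ : X₁ → ℝ, (∀ x, 0 ≤ Pt₁ x) ∧ (∑ x, Pt₁ x = 1) ∧
      v = ∑ y₁, W₁ x₁' y₁ ^ (1 - β) * (∑ x₁, Pt₁ x₁ * W₁ x₁ y₁ ^ α) ^ (β / α)}
      = SSetR (fun y => W₁ x₁' y ^ (1 - β)) (fun x y => W₁ x y ^ α) (β / α) := by
    intro x₁'; rfl
  have hset₂ : ∀ x₂' : X₂, {v : ℝ | ∃ Pt₂ : X₂ → ℝ, (∀ x, 0 ≤ Pt₂ x) ∧ (∑ x, Pt₂ x = 1) ∧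
      v = ∑ y₂, W₂ x₂' y₂ ^ (1 - β) * (∑ x₂, Pt₂ x₂ * W₂ x₂ y₂ ^ α) ^ (β / α)}
      = SSetR (fun y => W₂ x₂' y ^ (1 - β)) (fun x y => W₂ x y ^ α) (β / α) := by
    intro x₂'; rfl
  -- joint set equality
  have hsetJ : ∀ (x₁' : X₁) (x₂' : X₂),
      {v : ℝ | ∃ Pt : X₁ × X₂ → ℝ, (∀ p, 0 ≤ Pt p) ∧ (∑ p, Pt p = 1) ∧
          v = ∑ y₁, ∑ y₂, W₁ x₁' y₁ ^ (1 - β) * W₂ x₂' y₂ ^ (1 - β) *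
            (∑ x₁, ∑ x₂, Pt (x₁, x₂) * (W₁ x₁ y₁ ^ α * W₂ x₂ y₂ ^ α)) ^ (β / α)}
      = SSetR (fun y : Y₁ × Y₂ => W₁ x₁' y.1 ^ (1 - β) * W₂ x₂' y.2 ^ (1 - β))
          (fun (x : X₁ × X₂) (y : Y₁ × Y₂) => W₁ x.1 y.1 ^ α * W₂ x.2 y.2 ^ α) (β / α) := by
    intro x₁' x₂'
    ext v
    constructor
    · rintro ⟨Pt, h0, h1, rfl⟩
      exact ⟨Pt, h0, h1, (joint_val (fun y => W₁ x₁' y ^ (1 - β)) (fun x y => W₁ x y ^ α)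
        (fun y => W₂ x₂' y ^ (1 - β)) (fun x y => W₂ x y ^ α) (β / α) Pt).symm⟩
    · rintro ⟨Pt, h0, h1, rfl⟩
      exact ⟨Pt, h0, h1, joint_val (fun y => W₁ x₁' y ^ (1 - β)) (fun x y => W₁ x y ^ α)
        (fun y => W₂ x₂' y ^ (1 - β)) (fun x y => W₂ x y ^ α) (β / α) Pt⟩
  have part1 : ∀ (x₁' : X₁) (x₂' : X₂),
      sSup {v : ℝ | ∃ Pt : X₁ × X₂ → ℝ, (∀ p, 0 ≤ Pt p) ∧ (∑ p, Pt p = 1) ∧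
          v = ∑ y₁, ∑ y₂, W₁ x₁' y₁ ^ (1 - β) * W₂ x₂' y₂ ^ (1 - β) *
            (∑ x₁, ∑ x₂, Pt (x₁, x₂) * (W₁ x₁ y₁ ^ α * W₂ x₂ y₂ ^ α)) ^ (β / α)}
        = A₁ x₁' * A₂ x₂' := by
    intro x₁' x₂'
    rw [hsetJ x₁' x₂']
    simp only [hA₁def, hA₂def]
    exact pair_eq (fun y => W₁ x₁' y ^ (1 - β)) (fun x y => W₁ x y ^ α)
      (fun y => W₂ x₂' y ^ (1 - β)) (fun x y => W₂ x y ^ α) (β / α)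
      (ha₁ x₁') hu₁ (ha₂ x₂') hu₂ hr
  constructor
  · intro x₁' x₂'
    rw [part1 x₁' x₂', hset₁ x₁', hset₂ x₂']
  -- part 2
  set C : ℝ := α / ((α - 1) * β) with hCdef
  have hC : 0 < C := div_pos hα0 (mul_pos (sub_pos.2 hα) hβ0)
  have hA₁pos : ∀ x', 0 < A₁ x' := fun x' => sSup_SSetR_pos (ha₁ x') hu₁ hr
  have hA₂pos : ∀ x', 0 < A₂ x' := fun x' => sSup_SSetR_pos (ha₂ x') hu₂ hr
  obtain ⟨s₁, hs₁⟩ := Finite.exists_max A₁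
  obtain ⟨s₂, hs₂⟩ := Finite.exists_max A₂
  -- greatest elements of the three log-sets
  have hT₁ : IsGreatest {v : ℝ | ∃ x₁' : X₁, ∃ Pt₁ : X₁ → ℝ, (∀ x, 0 ≤ Pt₁ x) ∧ (∑ x, Pt₁ x = 1) ∧
      v = (α / ((α - 1) * β)) * Real.log
        (∑ y₁, W₁ x₁' y₁ ^ (1 - β) * (∑ x₁, Pt₁ x₁ * W₁ x₁ y₁ ^ α) ^ (β / α))}
      (C * Real.log (A₁ s₁)) := by
    constructor
    · obtain ⟨P, h0, h1, hv⟩ := (SSetR_isGreatest (fun y => W₁ s₁ y ^ (1 - β))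
        (fun x y => W₁ x y ^ α) hr).1
      refine ⟨s₁, P, h0, h1, ?_⟩
      simp only [hCdef, hA₁def, hv, Gfun]
    · rintro v ⟨x₁', P, h0, h1, rfl⟩
      have hg : Gfun (fun y => W₁ x₁' y ^ (1 - β)) (fun x y => W₁ x y ^ α) (β / α) P
          ∈ SSetR (fun y => W₁ x₁' y ^ (1 - β)) (fun x y => W₁ x y ^ α) (β / α) :=
        ⟨P, h0, h1, rfl⟩
      have hle : Gfun (fun y => W₁ x₁' y ^ (1 - β)) (fun x y => W₁ x y ^ α) (β / α) P ≤ A₁ s₁ :=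
        le_trans ((SSetR_isGreatest _ _ hr).2 hg) (hs₁ x₁')
      have hpos : 0 < Gfun (fun y => W₁ x₁' y ^ (1 - β)) (fun x y => W₁ x y ^ α) (β / α) P :=
        Gfun_pos (ha₁ x₁') hu₁ h0 h1
      have := mul_le_mul_of_nonneg_left (Real.log_le_log hpos hle) hC.le
      simpa only [hCdef, hA₁def, Gfun] using this
  have hT₂ : IsGreatest {v : ℝ | ∃ x₂' : X₂, ∃ Pt₂ : X₂ → ℝ, (∀ x, 0 ≤ Pt₂ x) ∧ (∑ x, Pt₂ x = 1) ∧
      v = (α / ((α - 1) * β)) * Real.log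
        (∑ y₂, W₂ x₂' y₂ ^ (1 - β) * (∑ x₂, Pt₂ x₂ * W₂ x₂ y₂ ^ α) ^ (β / α))}
      (C * Real.log (A₂ s₂)) := by
    constructor
    · obtain ⟨P, h0, h1, hv⟩ := (SSetR_isGreatest (fun y => W₂ s₂ y ^ (1 - β))
        (fun x y => W₂ x y ^ α) hr).1
      refine ⟨s₂, P, h0, h1, ?_⟩
      simp only [hCdef, hA₂def, hv, Gfun]
    · rintro v ⟨x₂', P, h0, h1, rfl⟩
      have hg : Gfun (fun y => W₂ x₂' y ^ (1 - β)) (fun x y => W₂ x y ^ α) (β / α) P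
          ∈ SSetR (fun y => W₂ x₂' y ^ (1 - β)) (fun x y => W₂ x y ^ α) (β / α) :=
        ⟨P, h0, h1, rfl⟩
      have hle : Gfun (fun y => W₂ x₂' y ^ (1 - β)) (fun x y => W₂ x y ^ α) (β / α) P ≤ A₂ s₂ :=
        le_trans ((SSetR_isGreatest _ _ hr).2 hg) (hs₂ x₂')
      have hpos : 0 < Gfun (fun y => W₂ x₂' y ^ (1 - β)) (fun x y => W₂ x y ^ α) (β / α) P :=
        Gfun_pos (ha₂ x₂') hu₂ h0 h1
      have := mul_le_mul_of_nonneg_left (Real.log_le_log hpos hle) hC.le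
      simpa only [hCdef, hA₂def, Gfun] using this
  have hTJ : IsGreatest {v : ℝ | ∃ x₁' : X₁, ∃ x₂' : X₂, ∃ Pt : X₁ × X₂ → ℝ,
      (∀ p, 0 ≤ Pt p) ∧ (∑ p, Pt p = 1) ∧
      v = (α / ((α - 1) * β)) * Real.log
        (∑ y₁, ∑ y₂, W₁ x₁' y₁ ^ (1 - β) * W₂ x₂' y₂ ^ (1 - β) *
          (∑ x₁, ∑ x₂, Pt (x₁, x₂) * (W₁ x₁ y₁ ^ α * W₂ x₂ y₂ ^ α)) ^ (β / α))}
      (C * Real.log (A₁ s₁ * A₂ s₂)) := by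
    constructor
    · obtain ⟨P₁, hP₁0, hP₁1, hv₁⟩ := (SSetR_isGreatest (fun y => W₁ s₁ y ^ (1 - β))
        (fun x y => W₁ x y ^ α) hr).1
      obtain ⟨P₂, hP₂0, hP₂1, hv₂⟩ := (SSetR_isGreatest (fun y => W₂ s₂ y ^ (1 - β))
        (fun x y => W₂ x y ^ α) hr).1
      refine ⟨s₁, s₂, fun p => P₁ p.1 * P₂ p.2,
        fun p => mul_nonneg (hP₁0 p.1) (hP₂0 p.2), ?_, ?_⟩
      · rw [Fintype.sum_prod_type]
        simp only [← Finset.mul_sum, hP₂1, mul_one, hP₁1]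
      · have hp := prod_val (fun y => W₁ s₁ y ^ (1 - β)) (fun x y => W₁ x y ^ α)
          (fun y => W₂ s₂ y ^ (1 - β)) (fun x y => W₂ x y ^ α) (β / α) hu₁ hu₂ hP₁0 hP₂0
        have hj := joint_val (fun y => W₁ s₁ y ^ (1 - β)) (fun x y => W₁ x y ^ α)
          (fun y => W₂ s₂ y ^ (1 - β)) (fun x y => W₂ x y ^ α) (β / α)
          (fun p => P₁ p.1 * P₂ p.2)
        simp only [hCdef, hA₁def, hA₂def]
        rw [hv₁, hv₂, ← hp, hj]
    · rintro v ⟨x₁', x₂', Pt, h0, h1, rfl⟩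
      have hE : (∑ y₁, ∑ y₂, W₁ x₁' y₁ ^ (1 - β) * W₂ x₂' y₂ ^ (1 - β) *
          (∑ x₁, ∑ x₂, Pt (x₁, x₂) * (W₁ x₁ y₁ ^ α * W₂ x₂ y₂ ^ α)) ^ (β / α))
          = Gfun (fun y : Y₁ × Y₂ => W₁ x₁' y.1 ^ (1 - β) * W₂ x₂' y.2 ^ (1 - β))
            (fun (x : X₁ × X₂) (y : Y₁ × Y₂) => W₁ x.1 y.1 ^ α * W₂ x.2 y.2 ^ α) (β / α) Pt :=
        (joint_val (fun y => W₁ x₁' y ^ (1 - β)) (fun x y => W₁ x y ^ α)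
          (fun y => W₂ x₂' y ^ (1 - β)) (fun x y => W₂ x y ^ α) (β / α) Pt).symm
      rw [hE]
      have hpos : 0 < Gfun (fun y : Y₁ × Y₂ => W₁ x₁' y.1 ^ (1 - β) * W₂ x₂' y.2 ^ (1 - β))
          (fun (x : X₁ × X₂) (y : Y₁ × Y₂) => W₁ x.1 y.1 ^ α * W₂ x.2 y.2 ^ α) (β / α) Pt :=
        Gfun_pos (fun y : Y₁ × Y₂ => mul_pos (ha₁ x₁' y.1) (ha₂ x₂' y.2))
          (fun (x : X₁ × X₂) (y : Y₁ × Y₂) => mul_pos (hu₁ x.1 y.1) (hu₂ x.2 y.2)) h0 h1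
      have hle : Gfun (fun y : Y₁ × Y₂ => W₁ x₁' y.1 ^ (1 - β) * W₂ x₂' y.2 ^ (1 - β))
          (fun (x : X₁ × X₂) (y : Y₁ × Y₂) => W₁ x.1 y.1 ^ α * W₂ x.2 y.2 ^ α) (β / α) Pt
          ≤ A₁ s₁ * A₂ s₂ := by
        refine le_trans (key_ineq (fun y => W₁ x₁' y ^ (1 - β)) (fun x y => W₁ x y ^ α)
          (fun y => W₂ x₂' y ^ (1 - β)) (fun x y => W₂ x y ^ α) (β / α)
          (ha₁ x₁') hu₁ (ha₂ x₂') hu₂ hr h0 h1) ?_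
        exact mul_le_mul (hs₁ x₁') (hs₂ x₂') (hA₂pos x₂').le (hA₁pos s₁).le
      have := mul_le_mul_of_nonneg_left (Real.log_le_log hpos hle) hC.le
      simpa only [hCdef] using this
  rw [hT₁.csSup_eq, hT₂.csSup_eq, hTJ.csSup_eq,
    Real.log_mul (hA₁pos s₁).ne' (hA₂pos s₂).ne']
  ring
end

section
/- Density of shattering distributions: for any finite set X, any full-support distribution P_X on X, any α > 1, and any full-support probability distribution Q on X, and any ε > 0, there exist positive integers (n_x)_{x∈X} such that the distribution P̃(x) = n_x^(1-α) P_X(x)^α / ∑_{x'} n_{x'}^(1-α) P_X(x')^α satisfies |P̃(x) − Q(x)| < ε for all x. -/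
open Finset Real Filter Topology

theorem stmt16 {X : Type*} [Fintype X] [Nonempty X]
    (PX : X → ℝ) (hPX : ∀ x, 0 < PX x) (hPXsum : ∑ x, PX x = 1)
    (Q : X → ℝ) (hQ : ∀ x, 0 < Q x) (hQsum : ∑ x, Q x = 1)
    {α : ℝ} (hα : 1 < α) {ε : ℝ} (hε : 0 < ε) :
    ∃ n : X → ℕ, (∀ x, 0 < n x) ∧
      ∀ x, |(n x : ℝ) ^ (1 - α) * PX x ^ α
              / (∑ x', (n x' : ℝ) ^ (1 - α) * PX x' ^ α) - Q x| < ε := by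
  have hα1 : 0 < α - 1 := by linarith
  set r : X → ℝ := fun x => (PX x ^ α / Q x) ^ ((α - 1)⁻¹) with hr
  have hrpos : ∀ x, 0 < r x := fun x =>
    Real.rpow_pos_of_pos (div_pos (Real.rpow_pos_of_pos (hPX x) α) (hQ x)) _
  -- ceil (N r x) / N → r x
  have hceil : ∀ x, Tendsto (fun N : ℕ => (⌈(N:ℝ) * r x⌉₊ : ℝ) / N) atTop (nhds (r x)) := by
    intro x
    have hupper : Tendsto (fun N : ℕ => r x + 1 / (N:ℝ)) atTop (nhds (r x)) := by
      simpa using tendsto_const_nhds.add (tendsto_one_div_atTop_nhds_zero_nat : Tendsto (fun n : ℕ => 1 / (n:ℝ)) atTop (nhds 0))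
    refine tendsto_of_tendsto_of_tendsto_of_le_of_le'
      (tendsto_const_nhds : Tendsto (fun _ : ℕ => r x) atTop (nhds (r x))) hupper ?_ ?_
    · filter_upwards [eventually_ge_atTop 1] with N hN
      have hN0 : (0:ℝ) < N := by exact_mod_cast hN
      rw [le_div_iff₀ hN0]
      calc r x * N = N * r x := mul_comm _ _
        _ ≤ ⌈(N:ℝ) * r x⌉₊ := Nat.le_ceil _
    · filter_upwards [eventually_ge_atTop 1] with N hN
      have hN0 : (0:ℝ) < N := by exact_mod_cast hN
      have h0 : 0 ≤ (N:ℝ) * r x := mul_nonneg hN0.le (hrpos x).le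
      rw [div_le_iff₀ hN0]
      calc (⌈(N:ℝ) * r x⌉₊:ℝ) ≤ N * r x + 1 := (Nat.ceil_lt_add_one h0).le
        _ = (r x + 1 / N) * N := by field_simp
  -- r x ^ (1-α) * PX x ^ α = Q x
  have hval : ∀ x, r x ^ (1 - α) * PX x ^ α = Q x := by
    intro x
    have hb : (0:ℝ) < PX x ^ α / Q x :=
      div_pos (Real.rpow_pos_of_pos (hPX x) α) (hQ x)
    have h1 : r x ^ (1 - α) = (PX x ^ α / Q x) ^ ((α - 1)⁻¹ * (1 - α)) := by
      rw [hr, ← Real.rpow_mul hb.le]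
    have h2 : (α - 1)⁻¹ * (1 - α) = -1 := by
      field_simp
      ring
    rw [h1, h2, Real.rpow_neg_one]
    have hP : PX x ^ α ≠ 0 := (Real.rpow_pos_of_pos (hPX x) α).ne'
    field_simp
  -- the (renormalized) terms H N x
  set H : ℕ → X → ℝ := fun N x => ((⌈(N:ℝ) * r x⌉₊ : ℝ) / N) ^ (1 - α) * PX x ^ α with hH
  have hHtend : ∀ x, Tendsto (fun N => H N x) atTop (nhds (Q x)) := by
    intro x
    have hc : ContinuousAt (fun t : ℝ => t ^ (1 - α)) (r x) :=
      Real.continuousAt_rpow_const _ _ (Or.inl (hrpos x).ne')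
    have := (hc.tendsto.comp (hceil x)).mul_const (PX x ^ α)
    rw [hval x] at this
    exact this
  have hSum : Tendsto (fun N => ∑ x', H N x') atTop (nhds 1) := by
    rw [← hQsum]
    exact tendsto_finset_sum _ fun x _ => hHtend x
  have hRatio : ∀ x, Tendsto (fun N => H N x / ∑ x', H N x') atTop (nhds (Q x)) := by
    intro x
    have := (hHtend x).div hSum one_ne_zero
    simp only [div_one] at this
    exact this
  -- eventual equality with the goal's expression
  have hEq : ∀ x, ∀ᶠ N : ℕ in atTop,
      (⌈(N:ℝ) * r x⌉₊ : ℝ) ^ (1 - α) * PX x ^ α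
        / (∑ x', (⌈(N:ℝ) * r x'⌉₊ : ℝ) ^ (1 - α) * PX x' ^ α)
      = H N x / ∑ x', H N x' := by
    intro x
    filter_upwards [eventually_ge_atTop 1] with N hN
    have hN0 : (0:ℝ) < N := by exact_mod_cast hN
    have hd : (0:ℝ) < (N:ℝ) ^ (1 - α) := Real.rpow_pos_of_pos hN0 _
    have hterm : ∀ y, H N y = (⌈(N:ℝ) * r y⌉₊ : ℝ) ^ (1 - α) * PX y ^ α / (N:ℝ) ^ (1 - α) := by
      intro y
      show ((⌈(N:ℝ) * r y⌉₊ : ℝ) / N) ^ (1 - α) * PX y ^ α = _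
      rw [Real.div_rpow (Nat.cast_nonneg _) hN0.le]
      ring
    simp only [hterm, ← Finset.sum_div]
    rw [div_div_div_comm, div_self hd.ne', div_one]
  have hRatio' : ∀ x, Tendsto (fun N : ℕ =>
      (⌈(N:ℝ) * r x⌉₊ : ℝ) ^ (1 - α) * PX x ^ α
        / (∑ x', (⌈(N:ℝ) * r x'⌉₊ : ℝ) ^ (1 - α) * PX x' ^ α)) atTop (nhds (Q x)) :=
    fun x => Tendsto.congr' ((hEq x).mono fun _ h => h.symm) (hRatio x)
  have hEps : ∀ᶠ N : ℕ in atTop, ∀ x,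
      |(⌈(N:ℝ) * r x⌉₊ : ℝ) ^ (1 - α) * PX x ^ α
        / (∑ x', (⌈(N:ℝ) * r x'⌉₊ : ℝ) ^ (1 - α) * PX x' ^ α) - Q x| < ε :=
    eventually_all.mpr fun x => (hRatio' x).eventually (eventually_abs_sub_lt _ hε)
  obtain ⟨N, hN1, hNε⟩ := ((eventually_ge_atTop 1).and hEps).exists
  refine ⟨fun x => ⌈(N:ℝ) * r x⌉₊, fun x => ?_, fun x => by simpa using hNε x⟩
  have hN0 : (0:ℝ) < N := by exact_mod_cast hN1
  exact Nat.ceil_pos.mpr (mul_pos hN0 (hrpos x))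
end
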